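/- arXiv:1802.07564 — 6 statements merged into one kernel-verified Lean document; each statement's English description precedes it below -/
import Mathlib

section
/- Let π_θ be a compatible family of PDFs on ℝ with CDF Π_θ and Π_θ(α) > 0. Then E_u[1_{u ≤ α} (∇_θ log π_θ(u))²] ≥ Π_θ(α) (∇_θ log Π_θ(α))², i.e., the second moment of the truncated score dominates the second moment obtained by replacing the score with the constant ∇_θ log Π_θ(α). -/
/-!
Where `p_θ(u) > 0` the score `ψ = ∂_θ log p_θ` satisfies `∂_θ p_θ = ψ · p_θ`, and where `p_θ(u) = 0`
both sides vanish because `θ` minimises `t ↦ p_t(u)`. Exchanging derivative and integral, the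
constant `c = ∂_θ log Π_θ(α)` is therefore the mean of `ψ` under the weight `p_θ` on `(-∞, α]`, and
the inequality is the nonnegativity of the corresponding variance `∫_{u ≤ α} (ψ - c)² p_θ`.
-/

open MeasureTheory Set Filter Topology

theorem HasDerivAt.eq_mul_of_hasDerivAt_log {f : ℝ → ℝ} {f' ψ x : ℝ}
    (hf_nonneg : ∀ᶠ t in 𝓝 x, 0 ≤ f t) (hf : HasDerivAt f f' x)
    (hlog : HasDerivAt (fun t => Real.log (f t)) ψ x) :
    f' = ψ * f x := by
  by_cases hx : f x = 0
  · have hmin : IsLocalMin f x := hf_nonneg.mono fun t ht => hx ▸ ht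
    rw [hmin.hasDerivAt_eq_zero hf, hx, mul_zero]
  · rw [hlog.unique (hf.log hx), div_mul_cancel₀ _ hx]

theorem integral_mul_sq_le_integral_sq_mul_of_integral_mul_eq {α : Type*} [MeasurableSpace α]
    {μ : Measure α} {w ψ : α → ℝ} {c : ℝ} (hw_nonneg : 0 ≤ᵐ[μ] w) (hw : Integrable w μ)
    (hψw : Integrable (fun x => ψ x * w x) μ) (hψ2w : Integrable (fun x => ψ x ^ 2 * w x) μ)
    (hmean : ∫ x, ψ x * w x ∂μ = c * ∫ x, w x ∂μ) :
    (∫ x, w x ∂μ) * c ^ 2 ≤ ∫ x, ψ x ^ 2 * w x ∂μ := by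
  have hvar : 0 ≤ ∫ x, (ψ x - c) ^ 2 * w x ∂μ :=
    integral_nonneg_of_ae <| hw_nonneg.mono fun x hx => mul_nonneg (sq_nonneg _) hx
  have hexpand : ∫ x, (ψ x - c) ^ 2 * w x ∂μ
      = ∫ x, ψ x ^ 2 * w x ∂μ - 2 * c * ∫ x, ψ x * w x ∂μ + c ^ 2 * ∫ x, w x ∂μ := by
    have hpoint : ∀ x, (ψ x - c) ^ 2 * w x
        = ψ x ^ 2 * w x - 2 * c * (ψ x * w x) + c ^ 2 * w x := fun x => by ring
    have hlin : Integrable (fun x => ψ x ^ 2 * w x - 2 * c * (ψ x * w x)) μ :=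
      hψ2w.sub (hψw.const_mul _)
    simp only [hpoint]
    rw [integral_add hlin (hw.const_mul _),
      integral_sub hψ2w (hψw.const_mul _), integral_const_mul, integral_const_mul]
  rw [hexpand, hmean] at hvar
  linarith

theorem capg_second_moment_lower_tail_general
    (p : ℝ → ℝ → ℝ) (p' ψ : ℝ → ℝ) (θ α cA : ℝ)
    (hnn : ∀ t u, 0 ≤ p t u)
    (hp' : ∀ u, HasDerivAt (fun t => p t u) (p' u) θ)
    (hψ : ∀ u, HasDerivAt (fun t => Real.log (p t u)) (ψ u) θ)
    (hswap : HasDerivAt (fun t => ∫ u in Iic α, p t u) (∫ u in Iic α, p' u) θ)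
    (hpos : 0 < ∫ u in Iic α, p θ u)
    (hcA : HasDerivAt (fun t => Real.log (∫ u in Iic α, p t u)) cA θ)
    (hint : IntegrableOn (fun u => (ψ u)^2 * p θ u) (Iic α))
    (hint1 : IntegrableOn (fun u => ψ u * p θ u) (Iic α)) :
    (∫ u in Iic α, p θ u) * cA^2 ≤ ∫ u in Iic α, (ψ u)^2 * p θ u := by
  -- `(e :)` keeps the expected type from unifying `f x` with `p θ u` as `f := p θ`.
  have hscore : ∀ u, p' u = ψ u * p θ u := fun u =>
    ((hp' u).eq_mul_of_hasDerivAt_log (.of_forall (hnn · u)) (hψ u) :)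
  have hcA_eq : cA = (∫ u in Iic α, p' u) / ∫ u in Iic α, p θ u :=
    hcA.unique (hswap.log hpos.ne')
  have hmean : ∫ u in Iic α, ψ u * p θ u = cA * ∫ u in Iic α, p θ u := by
    simp only [← hscore]
    rw [hcA_eq, div_mul_cancel₀ _ hpos.ne']
  exact integral_mul_sq_le_integral_sq_mul_of_integral_mul_eq
    (Eventually.of_forall (hnn θ)) (Integrable.of_integral_ne_zero hpos.ne') hint1 hint hmean

/-- the second moment of the truncated score dominates the second
moment obtained by replacing the score with the constant `∇_θ log Π_θ(α)`:
`E_u[1_{u ≤ α} (∇_θ log p_θ(u))²] ≥ Π_θ(α) · (∇_θ log Π_θ(α))²`. -/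
theorem capg_second_moment_lower_tail
    (p : ℝ → ℝ → ℝ) (p' ψ : ℝ → ℝ) (θ α cA : ℝ)
    (hpdf : ∀ t, ∫ u, p t u = 1) (hnn : ∀ t u, 0 ≤ p t u)
    (hp' : ∀ u, HasDerivAt (fun t => p t u) (p' u) θ)
    (hψ : ∀ u, HasDerivAt (fun t => Real.log (p t u)) (ψ u) θ)
    (hswap : HasDerivAt (fun t => ∫ u in Iic α, p t u) (∫ u in Iic α, p' u) θ)
    (hpos : 0 < ∫ u in Iic α, p θ u)
    (hcA : HasDerivAt (fun t => Real.log (∫ u in Iic α, p t u)) cA θ)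
    (hint : IntegrableOn (fun u => (ψ u)^2 * p θ u) (Iic α))
    (hint1 : IntegrableOn (fun u => ψ u * p θ u) (Iic α)) :
    (∫ u in Iic α, p θ u) * cA^2 ≤ ∫ u in Iic α, (ψ u)^2 * p θ u :=
  capg_second_moment_lower_tail_general p p' ψ θ α cA hnn hp' hψ hswap hpos hcA hint hint1
end

section
/- Let π_θ be a compatible family of PDFs on ℝ with CDF Π_θ. Then Var_u[1_{u ≤ α} ∇_θ log π_θ(u)] ≥ Var_u[1_{u ≤ α} ∇_θ log Π_θ(α)], where Var_u denotes the variance under u ∼ π_θ, with equality only if ∇_θ log π_θ(u) is π_θ-a.e. constant on (-∞, α]. -/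
open MeasureTheory Set

/-- Expectation of `g` under the density `p` (w.r.t. Lebesgue measure). -/
noncomputable def Epi (p g : ℝ → ℝ) : ℝ := ∫ u, g u * p u

/-- Variance of `g` under the density `p`. -/
noncomputable def Vpi (p g : ℝ → ℝ) : ℝ := ∫ u, (g u - Epi p g)^2 * p u

/-- Lemma 2 (lower tail).
`Var_u[1_{u ≤ α} ∇_θ log p_θ(u)] ≥ Var_u[1_{u ≤ α} ∇_θ log Π_θ(α)]`,
with equality only if the score is `p_θ`-a.e. constant on `(-∞, α]`. -/
theorem capg_lemma2_lower
    (p : ℝ → ℝ → ℝ) (p' ψ : ℝ → ℝ) (θ α cA : ℝ)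
    (hpdf : ∀ t, ∫ u, p t u = 1) (hnn : ∀ t u, 0 ≤ p t u)
    (hp' : ∀ u, HasDerivAt (fun t => p t u) (p' u) θ)
    (hψ : ∀ u, HasDerivAt (fun t => Real.log (p t u)) (ψ u) θ)
    (hswap : HasDerivAt (fun t => ∫ u in Iic α, p t u) (∫ u in Iic α, p' u) θ)
    (hpos : 0 < ∫ u in Iic α, p θ u)
    (hcA : HasDerivAt (fun t => Real.log (∫ u in Iic α, p t u)) cA θ)
    (hint2 : Integrable (fun u => ((Iic α).indicator ψ u)^2 * p θ u))
    (hint1 : Integrable (fun u => (Iic α).indicator ψ u * p θ u)) :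
    Vpi (p θ) ((Iic α).indicator (fun _ => cA)) ≤ Vpi (p θ) ((Iic α).indicator ψ) ∧
    (Vpi (p θ) ((Iic α).indicator (fun _ => cA)) = Vpi (p θ) ((Iic α).indicator ψ) →
      ∃ c : ℝ, ∀ᵐ u ∂((volume.withDensity fun u => ENNReal.ofReal (p θ u)).restrict (Iic α)),
        ψ u = c) := by
  classical
  have hmeas : MeasurableSet (Iic α : Set ℝ) := measurableSet_Iic
  set P : ℝ := ∫ u in Iic α, p θ u with hPdef
  -- p θ is integrable
  have hint_p : Integrable (p θ) := by
    by_contra h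
    have h1 := hpdf θ
    rw [integral_undef h] at h1
    norm_num at h1
  -- pointwise ψ u * p θ u = p' u
  have hkey : ∀ u, ψ u * p θ u = p' u := by
    intro u
    rcases (hnn θ u).lt_or_eq with h | h
    · have hd := (hp' u).log (ne_of_gt h)
      have he : ψ u = p' u / p θ u := (hψ u).unique hd
      rw [he]; field_simp
    · have hmin : IsLocalMin (fun t => p t u) θ :=
        Filter.Eventually.of_forall (fun t => by
          simpa [← h] using hnn t u)
      have h0 : p' u = 0 := hmin.hasDerivAt_eq_zero (hp' u)
      rw [← h, h0, mul_zero]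
  -- value of cA
  have hcAval : cA = (∫ u in Iic α, p' u) / P :=
    hcA.unique (hswap.log hpos.ne')
  have hcAP : cA * P = ∫ u in Iic α, p' u := by
    rw [hcAval, div_mul_cancel₀ _ hpos.ne']
  -- set-integral form of the indicator integrals
  have hindψ : ∀ u, (Iic α).indicator ψ u * p θ u
      = (Iic α).indicator (fun u => ψ u * p θ u) u := by
    intro u; rw [Set.indicator_mul_left]
  have hindψ2 : ∀ u, ((Iic α).indicator ψ u)^2 * p θ u
      = (Iic α).indicator (fun u => (ψ u)^2 * p θ u) u := by
    intro u
    by_cases hu : u ∈ Iic α <;> simp [Set.indicator_of_mem, Set.indicator_of_notMem, hu]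
  -- integrability on the restricted measure
  have hI1 : IntegrableOn (fun u => ψ u * p θ u) (Iic α) := by
    rw [← integrable_indicator_iff hmeas]
    exact hint1.congr (Filter.Eventually.of_forall fun u => (hindψ u))
  have hI2 : IntegrableOn (fun u => (ψ u)^2 * p θ u) (Iic α) := by
    rw [← integrable_indicator_iff hmeas]
    exact hint2.congr (Filter.Eventually.of_forall fun u => (hindψ2 u))
  have hIp : IntegrableOn (p θ) (Iic α) := hint_p.integrableOn
  -- the first moments
  have hm1 : ∫ u in Iic α, ψ u * p θ u = cA * P := by
    rw [hcAP]
    exact setIntegral_congr_fun hmeas (fun u _ => hkey u)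
  have hE1 : Epi (p θ) ((Iic α).indicator ψ) = cA * P := by
    unfold Epi
    rw [show (fun u => (Iic α).indicator ψ u * p θ u)
        = fun u => (Iic α).indicator (fun u => ψ u * p θ u) u from funext hindψ]
    rw [integral_indicator hmeas, hm1]
  have hE2 : Epi (p θ) ((Iic α).indicator (fun _ => cA)) = cA * P := by
    unfold Epi
    rw [show (fun u => (Iic α).indicator (fun _ => cA) u * p θ u)
        = fun u => (Iic α).indicator (fun u => cA * p θ u) u from
      funext fun u => by rw [Set.indicator_mul_left]]
    rw [integral_indicator hmeas, integral_const_mul]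
  set m : ℝ := cA * P with hm
  -- second moments
  have hS2 : ∫ u, ((Iic α).indicator ψ u)^2 * p θ u = ∫ u in Iic α, (ψ u)^2 * p θ u := by
    rw [show (fun u => ((Iic α).indicator ψ u)^2 * p θ u)
        = fun u => (Iic α).indicator (fun u => (ψ u)^2 * p θ u) u from funext hindψ2]
    exact integral_indicator hmeas
  -- variance expansions
  have hVψ : Vpi (p θ) ((Iic α).indicator ψ)
      = (∫ u in Iic α, (ψ u)^2 * p θ u) - m^2 := by
    unfold Vpi
    rw [hE1]
    have hexp : ∀ u, ((Iic α).indicator ψ u - m)^2 * p θ u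
        = ((Iic α).indicator ψ u)^2 * p θ u
          - (2*m) * ((Iic α).indicator ψ u * p θ u) + m^2 * p θ u := by
      intro u; ring
    rw [show (fun u => ((Iic α).indicator ψ u - m)^2 * p θ u) = _ from funext hexp]
    have hfg : Integrable (fun u => ((Iic α).indicator ψ u)^2 * p θ u
        - (2*m) * ((Iic α).indicator ψ u * p θ u)) := hint2.sub (hint1.const_mul _)
    rw [integral_add hfg (hint_p.const_mul _),
      integral_sub hint2 (hint1.const_mul _), integral_const_mul, integral_const_mul,
      hS2, hpdf θ]
    have : ∫ u, (Iic α).indicator ψ u * p θ u = m := hE1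
    rw [this]; ring
  have hint1c : Integrable (fun u => (Iic α).indicator (fun _ => cA) u * p θ u) := by
    have : (fun u => (Iic α).indicator (fun _ => cA) u * p θ u)
        = fun u => (Iic α).indicator (fun u => cA * p θ u) u :=
      funext fun u => by rw [Set.indicator_mul_left]
    rw [this, integrable_indicator_iff hmeas]
    exact (hIp.const_mul _)
  have hint2c : Integrable (fun u => ((Iic α).indicator (fun _ => cA) u)^2 * p θ u) := by
    have : (fun u => ((Iic α).indicator (fun _ => cA) u)^2 * p θ u)
        = fun u => (Iic α).indicator (fun u => cA^2 * p θ u) u :=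
      funext fun u => by
        by_cases hu : u ∈ Iic α <;> simp [hu]
    rw [this, integrable_indicator_iff hmeas]
    exact (hIp.const_mul _)
  have hVc : Vpi (p θ) ((Iic α).indicator (fun _ => cA)) = cA^2 * P - m^2 := by
    unfold Vpi
    rw [hE2]
    have hexp : ∀ u, ((Iic α).indicator (fun _ => cA) u - m)^2 * p θ u
        = ((Iic α).indicator (fun _ => cA) u)^2 * p θ u
          - (2*m) * ((Iic α).indicator (fun _ => cA) u * p θ u) + m^2 * p θ u := by
      intro u; ring
    rw [show (fun u => ((Iic α).indicator (fun _ => cA) u - m)^2 * p θ u) = _ from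
      funext hexp]
    have hfg : Integrable (fun u => ((Iic α).indicator (fun _ => cA) u)^2 * p θ u
        - (2*m) * ((Iic α).indicator (fun _ => cA) u * p θ u)) := hint2c.sub (hint1c.const_mul _)
    rw [integral_add hfg (hint_p.const_mul _),
      integral_sub hint2c (hint1c.const_mul _), integral_const_mul, integral_const_mul,
      hpdf θ]
    have h2 : ∫ u, ((Iic α).indicator (fun _ => cA) u)^2 * p θ u = cA^2 * P := by
      have : (fun u => ((Iic α).indicator (fun _ => cA) u)^2 * p θ u)
          = fun u => (Iic α).indicator (fun u => cA^2 * p θ u) u :=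
        funext fun u => by by_cases hu : u ∈ Iic α <;> simp [hu]
      rw [this, integral_indicator hmeas, integral_const_mul]
    have h1 : ∫ u, (Iic α).indicator (fun _ => cA) u * p θ u = m := hE2
    rw [h1, h2]; ring
  -- the difference is a nonnegative set integral
  have hD : (∫ u in Iic α, (ψ u - cA)^2 * p θ u)
      = (∫ u in Iic α, (ψ u)^2 * p θ u) - cA^2 * P := by
    have hexp : ∀ u, (ψ u - cA)^2 * p θ u
        = (ψ u)^2 * p θ u - (2*cA) * (ψ u * p θ u) + cA^2 * p θ u := by
      intro u; ring
    rw [show (fun u => (ψ u - cA)^2 * p θ u) = _ from funext hexp]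
    have hfg : Integrable (fun u => (ψ u)^2 * p θ u - (2*cA) * (ψ u * p θ u))
        (volume.restrict (Iic α)) := hI2.sub (hI1.const_mul _)
    rw [integral_add hfg (hIp.const_mul _),
      integral_sub hI2 (hI1.const_mul _), integral_const_mul, integral_const_mul,
      hm1, ← hPdef]
    ring
  have hDnn : 0 ≤ ∫ u in Iic α, (ψ u - cA)^2 * p θ u :=
    setIntegral_nonneg hmeas fun u _ => mul_nonneg (sq_nonneg _) (hnn θ u)
  constructor
  · rw [hVψ, hVc]
    have := hD ▸ hDnn
    linarith
  · intro heq
    refine ⟨cA, ?_⟩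
    have hD0 : ∫ u in Iic α, (ψ u - cA)^2 * p θ u = 0 := by
      rw [hVψ, hVc] at heq
      rw [hD]; linarith
    have hae : (fun u => (ψ u - cA)^2 * p θ u) =ᶠ[ae (volume.restrict (Iic α))] 0 := by
      have hIon : Integrable (fun u => (ψ u - cA)^2 * p θ u) (volume.restrict (Iic α)) := by
        have hexp : ∀ u, (ψ u - cA)^2 * p θ u
            = (ψ u)^2 * p θ u - (2*cA) * (ψ u * p θ u) + cA^2 * p θ u := by
          intro u; ring
        rw [show (fun u => (ψ u - cA)^2 * p θ u) = _ from funext hexp]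
        exact (hI2.sub (hI1.const_mul _)).add (hIp.const_mul _)
      exact (integral_eq_zero_iff_of_nonneg
        (fun u => mul_nonneg (sq_nonneg _) (hnn θ u)) hIon).mp hD0
    -- move to the withDensity measure
    obtain ⟨g, hgmeas, hgae⟩ := hint_p.aemeasurable
    have hwd : (volume.withDensity fun u => ENNReal.ofReal (p θ u))
        = volume.withDensity fun u => ENNReal.ofReal (g u) :=
      withDensity_congr_ae (hgae.mono fun u hu => by simp [hu])
    rw [hwd, restrict_withDensity hmeas,
      ae_withDensity_iff hgmeas.ennreal_ofReal]
    have hgae' : p θ =ᶠ[ae (volume.restrict (Iic α))] g := ae_restrict_of_ae hgae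
    filter_upwards [hae, hgae'] with u hu hgu hne
    have hgpos : 0 < g u := by
      by_contra h
      exact hne (by simp [ENNReal.ofReal_eq_zero.mpr (le_of_not_gt h)])
    have hppos : 0 < p θ u := hgu ▸ hgpos
    have : (ψ u - cA)^2 = 0 := by
      by_contra h2
      have := mul_ne_zero h2 hppos.ne'
      simp only [Pi.zero_apply] at hu
      exact this hu
    have := pow_eq_zero_iff (n := 2) (by norm_num) |>.mp this
    linarith [sub_eq_zero.mp this]
end

section
/- Let π_θ be a compatible family of PDFs on ℝ with CDF Π_θ and Π_θ(β) < 1. Then Var_u[1_{β ≤ u} ∇_θ log π_θ(u)] ≥ Var_u[1_{β ≤ u} ∇_θ log(1 - Π_θ(β))] under u ∼ π_θ. -/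
open MeasureTheory Set

lemma var_expand (p g : ℝ → ℝ) (hp : Integrable p) (hpdf : ∫ u, p u = 1)
    (h1 : Integrable (fun u => g u * p u)) (h2 : Integrable (fun u => (g u)^2 * p u)) :
    Vpi p g = (∫ u, (g u)^2 * p u) - (Epi p g)^2 := by
  have hE : Epi p g = ∫ u, g u * p u := rfl
  unfold Vpi
  have hpt : ∀ u, (g u - Epi p g)^2 * p u
      = ((g u)^2 * p u - (2 * Epi p g) * (g u * p u)) + (Epi p g)^2 * p u := by
    intro u; ring
  simp only [hpt]
  have i1' : Integrable (fun u => (2 * Epi p g) * (g u * p u)) := h1.const_mul _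
  have i3 : Integrable (fun u => (g u)^2 * p u - (2 * Epi p g) * (g u * p u)) := h2.sub i1'
  have i4 : Integrable (fun u => (Epi p g)^2 * p u) := hp.const_mul _
  rw [integral_add i3 i4, integral_sub h2 i1', integral_const_mul, integral_const_mul, hpdf, ← hE]
  ring

/-- Lemma 2 (upper tail).
`Var_u[1_{β ≤ u} ∇_θ log p_θ(u)] ≥ Var_u[1_{β ≤ u} ∇_θ log (1 - Π_θ(β))]`. -/
theorem capg_lemma2_upper
    (p : ℝ → ℝ → ℝ) (p' ψ : ℝ → ℝ) (θ β cB : ℝ)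
    (hpdf : ∀ t, ∫ u, p t u = 1) (hnn : ∀ t u, 0 ≤ p t u)
    (hp' : ∀ u, HasDerivAt (fun t => p t u) (p' u) θ)
    (hψ : ∀ u, HasDerivAt (fun t => Real.log (p t u)) (ψ u) θ)
    (hswap : HasDerivAt (fun t => ∫ u in Ici β, p t u) (∫ u in Ici β, p' u) θ)
    (hlt : (∫ u in Iic β, p θ u) < 1)
    (hcB : HasDerivAt (fun t => Real.log (1 - ∫ u in Iic β, p t u)) cB θ)
    (hint2 : Integrable (fun u => ((Ici β).indicator ψ u)^2 * p θ u))
    (hint1 : Integrable (fun u => (Ici β).indicator ψ u * p θ u)) :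
    Vpi (p θ) ((Ici β).indicator (fun _ => cB)) ≤ Vpi (p θ) ((Ici β).indicator ψ) := by
  have hA : MeasurableSet (Ici β) := measurableSet_Ici
  -- integrability of the densities
  have hintp : ∀ t, Integrable (p t) := by
    intro t
    by_contra h
    have := hpdf t
    rw [integral_undef h] at this
    norm_num at this
  -- splitting the integral
  have hsplit : ∀ t, (∫ u in Iic β, p t u) + (∫ u in Ici β, p t u) = 1 := by
    intro t
    rw [integral_Ici_eq_integral_Ioi,
      intervalIntegral.integral_Iic_add_Ioi ((hintp t).integrableOn) ((hintp t).integrableOn), hpdf t]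
  set q : ℝ := ∫ u in Ici β, p θ u with hqdef
  have hqpos : 0 < q := by
    have := hsplit θ
    simp only [← hqdef] at this
    linarith
  -- score identity
  have hkey : ∀ u, ψ u * p θ u = p' u := by
    intro u
    by_cases h : p θ u = 0
    · have hmin : IsLocalMin (fun t => p t u) θ := by
        apply Filter.Eventually.of_forall
        intro t
        simpa [h] using hnn t u
      rw [hmin.hasDerivAt_eq_zero (hp' u), h, mul_zero]
    · have hlog : HasDerivAt (fun t => Real.log (p t u)) (p' u / p θ u) θ :=
        (hp' u).log h
      have := (hψ u).unique hlog
      rw [this]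
      field_simp
  -- identify cB
  have hcBq : cB * q = ∫ u in Ici β, p' u := by
    have hlog2 : HasDerivAt (fun t => Real.log (∫ u in Ici β, p t u))
        ((∫ u in Ici β, p' u) / q) θ := hswap.log hqpos.ne'
    have hfe : (fun t => Real.log (1 - ∫ u in Iic β, p t u))
        = fun t => Real.log (∫ u in Ici β, p t u) := by
      funext t
      have := hsplit t
      congr 1
      linarith
    rw [hfe] at hcB
    have := hcB.unique hlog2
    rw [this]
    field_simp
  -- first moment of the indicator score
  have hEf : (∫ u, (Ici β).indicator ψ u * p θ u) = cB * q := by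
    have hpt : ∀ u, (Ici β).indicator ψ u * p θ u
        = (Ici β).indicator p' u := by
      intro u
      by_cases h : u ∈ Ici β
      · simp [indicator_of_mem h, hkey u]
      · simp [indicator_of_notMem h]
    simp only [hpt]
    rw [integral_indicator hA, hcBq]
  -- first moment of the constant indicator
  have hptg : ∀ u, (Ici β).indicator (fun _ => cB) u * p θ u
      = (Ici β).indicator (fun u => cB * p θ u) u := by
    intro u
    by_cases h : u ∈ Ici β
    · simp [indicator_of_mem h]
    · simp [indicator_of_notMem h]
  have hintg1 : Integrable (fun u => (Ici β).indicator (fun _ => cB) u * p θ u) :=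
    ((((hintp θ).const_mul cB).indicator hA)).congr
      (Filter.Eventually.of_forall fun u => (hptg u).symm)
  have hEg : (∫ u, (Ici β).indicator (fun _ => cB) u * p θ u) = cB * q := by
    simp only [hptg]
    rw [integral_indicator hA, integral_const_mul]
  -- second moment of the constant indicator
  have hptg2 : ∀ u, ((Ici β).indicator (fun _ => cB) u)^2 * p θ u
      = (Ici β).indicator (fun u => cB ^ 2 * p θ u) u := by
    intro u
    by_cases h : u ∈ Ici β
    · simp [indicator_of_mem h]
    · simp [indicator_of_notMem h]
  have hintg2 : Integrable (fun u => ((Ici β).indicator (fun _ => cB) u)^2 * p θ u) :=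
    ((((hintp θ).const_mul (cB ^ 2)).indicator hA)).congr
      (Filter.Eventually.of_forall fun u => (hptg2 u).symm)
  have hMg : (∫ u, ((Ici β).indicator (fun _ => cB) u)^2 * p θ u) = cB ^ 2 * q := by
    simp only [hptg2]
    rw [integral_indicator hA, integral_const_mul]
  -- key inequality via nonnegativity of (ψ - cB)^2
  have hindq : (∫ u, (Ici β).indicator (p θ) u) = q := by
    rw [integral_indicator hA]
  have hnonneg : 0 ≤ ∫ u, (Ici β).indicator (fun u => (ψ u - cB)^2 * p θ u) u := by
    apply integral_nonneg
    intro u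
    apply indicator_nonneg
    intro x _
    exact mul_nonneg (sq_nonneg _) (hnn θ x)
  have hsqpt : ∀ u, (Ici β).indicator (fun u => (ψ u - cB)^2 * p θ u) u
      = (((Ici β).indicator ψ u)^2 * p θ u - (2 * cB) * ((Ici β).indicator ψ u * p θ u))
        + cB ^ 2 * (Ici β).indicator (p θ) u := by
    intro u
    by_cases h : u ∈ Ici β
    · simp only [indicator_of_mem h]; ring
    · simp [indicator_of_notMem h]
  have hintind : Integrable ((Ici β).indicator (p θ)) := (hintp θ).indicator hA
  have hkey2 : cB ^ 2 * q ≤ ∫ u, ((Ici β).indicator ψ u)^2 * p θ u := by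
    have heval : (∫ u, (Ici β).indicator (fun u => (ψ u - cB)^2 * p θ u) u)
        = (∫ u, ((Ici β).indicator ψ u)^2 * p θ u) - (2 * cB) * (cB * q) + cB ^ 2 * q := by
      simp only [hsqpt]
      have i1' : Integrable (fun u => (2 * cB) * ((Ici β).indicator ψ u * p θ u)) :=
        hint1.const_mul _
      have i3 : Integrable (fun u => ((Ici β).indicator ψ u)^2 * p θ u
          - (2 * cB) * ((Ici β).indicator ψ u * p θ u)) := hint2.sub i1'
      have i4 : Integrable (fun u => cB ^ 2 * (Ici β).indicator (p θ) u) := hintind.const_mul _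
      rw [integral_add i3 i4, integral_sub hint2 i1', integral_const_mul, integral_const_mul,
        hEf, hindq]
    rw [heval] at hnonneg
    nlinarith [hnonneg]
  -- conclude via variance expansion
  rw [var_expand (p θ) _ (hintp θ) (hpdf θ) hintg1 hintg2,
    var_expand (p θ) _ (hintp θ) (hpdf θ) hint1 hint2]
  unfold Epi
  rw [hEf, hEg, hMg]
  linarith [hkey2]
end

section
/- Let π_θ be a compatible family of PDFs on ℝ with CDF Π_θ, α < β, 0 < Π_θ(α) and Π_θ(β) < 1. Let f: ℝ → ℝ satisfy f(u) = f(α) for u ≤ α and f(u) = f(β) for u ≥ β, with f bounded. Define ψ(u) = ∇_θ log π_θ(u) and ψ̄(u) = ∇_θ log Π_θ(α) for u ≤ α, ∇_θ log π_θ(u) for α < u < β, and ∇_θ log(1 - Π_θ(β)) for u ≥ β. Then E_u[f(u) ψ̄(u)] = E_u[f(u) ψ(u)]. -/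
open MeasureTheory Set

/-- unbiasedness of the clipped action policy gradient (scalar case).
If `f` is bounded and constant on each clipped tail, then
`E_u[f(u) ψ̄(u)] = E_u[f(u) ψ(u)]` where `ψ̄` is the CAPG score. -/
theorem capg_unbiased_scalar
    (p : ℝ → ℝ → ℝ) (p' ψ ψbar f : ℝ → ℝ) (θ α β cA cB : ℝ) (hαβ : α < β)
    (hpdf : ∀ t, ∫ u, p t u = 1) (hnn : ∀ t u, 0 ≤ p t u)
    (hp' : ∀ u, HasDerivAt (fun t => p t u) (p' u) θ)
    (hψ : ∀ u, HasDerivAt (fun t => Real.log (p t u)) (ψ u) θ)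
    (hswapA : HasDerivAt (fun t => ∫ u in Iic α, p t u) (∫ u in Iic α, p' u) θ)
    (hswapB : HasDerivAt (fun t => ∫ u in Ici β, p t u) (∫ u in Ici β, p' u) θ)
    (hposA : 0 < ∫ u in Iic α, p θ u)
    (hltB : (∫ u in Iic β, p θ u) < 1)
    (hcA : HasDerivAt (fun t => Real.log (∫ u in Iic α, p t u)) cA θ)
    (hcB : HasDerivAt (fun t => Real.log (1 - ∫ u in Iic β, p t u)) cB θ)
    (hψbar : ∀ u, ψbar u = if u ≤ α then cA else if u < β then ψ u else cB)
    (hfA : ∀ u, u ≤ α → f u = f α) (hfB : ∀ u, β ≤ u → f u = f β)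
    (hfbdd : ∃ M : ℝ, ∀ u, |f u| ≤ M)
    (hint : Integrable (fun u => f u * ψ u * p θ u))
    (hint' : Integrable (fun u => f u * ψbar u * p θ u)) :
    ∫ u, f u * ψbar u * p θ u = ∫ u, f u * ψ u * p θ u := by
  -- integrability of p t
  have hintp : ∀ t, Integrable (p t) := by
    intro t
    by_contra h
    have := integral_undef h
    rw [hpdf t] at this
    norm_num at this
  -- ψ u * p θ u = p' u everywhere
  have hψp : ∀ u, ψ u * p θ u = p' u := by
    intro u
    by_cases h : p θ u = 0
    · have hmin : IsLocalMin (fun t => p t u) θ :=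
        Filter.Eventually.of_forall (fun t => by simpa [h] using hnn t u)
      have hz : p' u = 0 := hmin.hasDerivAt_eq_zero (hp' u)
      rw [h, hz, mul_zero]
    · have hlog := (hp' u).log h
      have := (hψ u).unique hlog
      rw [this]
      field_simp
  -- Ici β integral = 1 - Iic β integral
  have hIci : ∀ t, ∫ u in Ici β, p t u = 1 - ∫ u in Iic β, p t u := by
    intro t
    have h1 : (∫ u in Iic β, p t u) + ∫ u in Ioi β, p t u = ∫ u, p t u :=
      intervalIntegral.integral_Iic_add_Ioi (hintp t).integrableOn (hintp t).integrableOn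
    have h2 : ∫ u in Ici β, p t u = ∫ u in Ioi β, p t u :=
      (setIntegral_congr_set Ioi_ae_eq_Ici).symm
    rw [hpdf t] at h1
    linarith
  have hposB : 0 < ∫ u in Ici β, p θ u := by rw [hIci]; linarith
  -- cA identity
  have hcA' : cA * ∫ u in Iic α, p θ u = ∫ u in Iic α, p' u := by
    have h := hcA.unique (hswapA.log hposA.ne')
    rw [h]; field_simp
  -- cB identity
  have hcB' : cB * ∫ u in Ici β, p θ u = ∫ u in Ici β, p' u := by
    have heq : (fun t => Real.log (1 - ∫ u in Iic β, p t u))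
        = fun t => Real.log (∫ u in Ici β, p t u) := by
      funext t; rw [hIci t]
    rw [heq] at hcB
    have h := hcB.unique (hswapB.log hposB.ne')
    rw [h]; field_simp
  -- pointwise identity for the unclipped integrand
  have key : ∀ u, f u * ψ u * p θ u = f u * p' u := by
    intro u; rw [mul_assoc, hψp u]
  have hint2 : Integrable (fun u => f u * p' u) := by
    exact hint.congr (Filter.Eventually.of_forall key)
  -- splitting lemma
  have hsplit : ∀ g : ℝ → ℝ, Integrable g →
      ∫ u, g u = (∫ u in Iic α, g u) + (∫ u in Ioc α β, g u) + (∫ u in Ioi β, g u) := by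
    intro g hg
    have h1 : (∫ u in Iic α, g u) + ∫ u in Ioi α, g u = ∫ u, g u :=
      intervalIntegral.integral_Iic_add_Ioi hg.integrableOn hg.integrableOn
    have h2 : ∫ u in Ioi α, g u = (∫ u in Ioc α β, g u) + ∫ u in Ioi β, g u := by
      rw [← setIntegral_union (Ioc_disjoint_Ioi le_rfl) measurableSet_Ioi
        hg.integrableOn hg.integrableOn, Ioc_union_Ioi_eq_Ioi hαβ.le]
    linarith
  rw [hsplit _ hint', hsplit _ hint]
  -- region Iic α
  have eA : ∫ u in Iic α, f u * ψbar u * p θ u = ∫ u in Iic α, f u * ψ u * p θ u := by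
    have l1 : ∫ u in Iic α, f u * ψbar u * p θ u = f α * cA * ∫ u in Iic α, p θ u := by
      rw [← integral_const_mul]
      apply setIntegral_congr_fun measurableSet_Iic
      intro u hu
      show f u * ψbar u * p θ u = f α * cA * p θ u
      rw [hψbar u, if_pos (mem_Iic.mp hu), hfA u (mem_Iic.mp hu)]
    have l2 : ∫ u in Iic α, f u * ψ u * p θ u = f α * ∫ u in Iic α, p' u := by
      rw [← integral_const_mul]
      apply setIntegral_congr_fun measurableSet_Iic
      intro u hu
      show f u * ψ u * p θ u = f α * p' u
      rw [key u, hfA u (mem_Iic.mp hu)]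
    rw [l1, l2, mul_assoc, hcA']
  -- region Ioc α β
  have eB : ∫ u in Ioc α β, f u * ψbar u * p θ u = ∫ u in Ioc α β, f u * ψ u * p θ u := by
    rw [← setIntegral_congr_set Ioo_ae_eq_Ioc, ← setIntegral_congr_set Ioo_ae_eq_Ioc]
    apply setIntegral_congr_fun measurableSet_Ioo
    intro u hu
    show f u * ψbar u * p θ u = f u * ψ u * p θ u
    rw [hψbar u, if_neg (not_le.mpr hu.1), if_pos hu.2]
  -- region Ioi β
  have eC : ∫ u in Ioi β, f u * ψbar u * p θ u = ∫ u in Ioi β, f u * ψ u * p θ u := by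
    have l1 : ∫ u in Ioi β, f u * ψbar u * p θ u = f β * cB * ∫ u in Ioi β, p θ u := by
      rw [← integral_const_mul]
      apply setIntegral_congr_fun measurableSet_Ioi
      intro u hu
      show f u * ψbar u * p θ u = f β * cB * p θ u
      rw [hψbar u, if_neg (by linarith [hu.out] : ¬ u ≤ α), if_neg (not_lt.mpr hu.out.le),
        hfB u hu.out.le]
    have l2 : ∫ u in Ioi β, f u * ψ u * p θ u = f β * ∫ u in Ioi β, p' u := by
      rw [← integral_const_mul]
      apply setIntegral_congr_fun measurableSet_Ioi
      intro u hu
      show f u * ψ u * p θ u = f β * p' u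
      rw [key u, hfB u hu.out.le]
    have l3 : ∫ u in Ioi β, p θ u = ∫ u in Ici β, p θ u := setIntegral_congr_set Ioi_ae_eq_Ici
    have l4 : ∫ u in Ioi β, p' u = ∫ u in Ici β, p' u := setIntegral_congr_set Ioi_ae_eq_Ici
    rw [l1, l2, l3, l4, mul_assoc, hcB']
  rw [eA, eB, eC]
end

section
/- Let u₁, ..., u_d be independent real random variables with u_i having compatible density π_θ^{(i)} and CDF Π_θ^{(i)}, and let f: ℝ^d → ℝ be bounded measurable with f(u) = f(clip(u, α, β)) (clipping applied elementwise). Define ψ(u) = Σ_i ∇_θ log π_θ^{(i)}(u_i) and ψ̄(u) = Σ_i ψ̄^{(i)}(u_i), where ψ̄^{(i)} is the CAPG score of π_θ^{(i)}. Then E_u[f(u) ψ̄(u)] = E_u[f(u) ψ(u)]. -/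
/-!
The CAPG score `ψ̄⁽ⁱ⁾` is the conditional expectation of the score `ψ⁽ⁱ⁾` given the clipped
coordinate: on the tail `{uᵢ ≤ α}` the mean of `∇ log π⁽ⁱ⁾` is `∇ Π⁽ⁱ⁾(α) / Π⁽ⁱ⁾(α)` (derivative
and integral commute), on `{uᵢ ≥ β}` it is `∇ log (1 - Π⁽ⁱ⁾(β))`, and in between the two scores
agree. So `δᵢ = ψ̄⁽ⁱ⁾ - ψ⁽ⁱ⁾` integrates to zero against `π⁽ⁱ⁾` times any function of the clipped
coordinate. Since `f` depends on `u` only through its clipping and the density is a product,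
integrating out `u₁` (Fubini) kills the `δ₁` term and leaves a bounded clip-invariant function of
the remaining coordinates; induction on `d` finishes.
-/

open MeasureTheory Set

def clip (α β x : ℝ) : ℝ := max (min x β) α

@[simp] lemma clip_clip (α β x : ℝ) : clip α β (clip α β x) = clip α β x := by
  unfold clip
  rcases le_total α β with h | h <;> simp [h]

lemma clip_of_le_left {α β x : ℝ} (hx : x ≤ α) : clip α β x = clip α β α := by
  simp [clip, min_le_of_left_le hx]

lemma clip_of_right_le {α β x : ℝ} (hx : β ≤ x) : clip α β x = clip α β β := by
  simp [clip, hx]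

def ClipInvariant {ι : Type*} (α β : ℝ) (f : (ι → ℝ) → ℝ) : Prop :=
  ∀ u, f u = f (fun i => clip α β (u i))

lemma ClipInvariant.apply_eq {ι : Type*} {α β : ℝ} {f : (ι → ℝ) → ℝ} (hf : ClipInvariant α β f)
    {u v : ι → ℝ} (huv : ∀ i, clip α β (u i) = clip α β (v i)) : f u = f v := by
  rw [hf u, hf v]
  simp only [huv]

lemma ClipInvariant.apply_finCons_eq {n : ℕ} {α β : ℝ} {f : (Fin (n + 1) → ℝ) → ℝ}
    (hf : ClipInvariant α β f) {x x' : ℝ} {y y' : Fin n → ℝ} (hx : clip α β x = clip α β x')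
    (hy : ∀ j, clip α β (y j) = clip α β (y' j)) :
    f (Fin.cons x y) = f (Fin.cons x' y') :=
  hf.apply_eq fun i => Fin.cases hx hy i

lemma ClipInvariant.integral_finCons_mul {n : ℕ} {α β : ℝ} {f : (Fin (n + 1) → ℝ) → ℝ}
    (hf : ClipInvariant α β f) (q : ℝ → ℝ) :
    ClipInvariant α β fun y => ∫ x, f (Fin.cons x y) * q x := fun y => by
  simp only [hf.apply_finCons_eq rfl fun j => (clip_clip α β (y j)).symm]

/-- `δ` has zero conditional mean given `clip α β u` when `u` has density `q`. -/
def IsClipCentered (α β : ℝ) (δ q : ℝ → ℝ) : Prop :=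
  ∀ h : ℝ → ℝ, (∀ x, h x = h (clip α β x)) → Integrable (fun x => h x * δ x * q x) →
    ∫ x, h x * δ x * q x = 0

lemma setIntegral_sub_mul_eq_zero {X : Type*} [MeasurableSpace X] {μ : Measure X} {S : Set X}
    {q s : X → ℝ} {c : ℝ} (hq : IntegrableOn q S μ)
    (hc : c * ∫ x in S, q x ∂μ = ∫ x in S, s x * q x ∂μ) :
    ∫ x in S, (c - s x) * q x ∂μ = 0 := by
  by_cases hsq : IntegrableOn (fun x => s x * q x) S μ
  · simp_rw [sub_mul]
    rw [integral_sub (hq.const_mul c) hsq, integral_const_mul, hc, sub_self]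
  · refine integral_undef fun h => hsq ?_
    refine ((hq.const_mul c).sub h).congr (ae_of_all _ fun x => ?_)
    simp only [Pi.sub_apply]
    ring

lemma isClipCentered_of_tails {α β cA cB : ℝ} {δ q s : ℝ → ℝ} (hαβ : α < β) (hq : Integrable q)
    (hδ : ∀ x, δ x = if x ≤ α then cA - s x else if x < β then 0 else cB - s x)
    (hA : cA * ∫ x in Iic α, q x = ∫ x in Iic α, s x * q x)
    (hB : cB * ∫ x in Ici β, q x = ∫ x in Ici β, s x * q x) :
    IsClipCentered α β δ q := by
  intro h hh hint
  have tail : ∀ {S : Set ℝ} {a c : ℝ}, MeasurableSet S → (∀ x ∈ S, clip α β x = a) →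
      (∀ x ∈ S, δ x = c - s x) → c * ∫ x in S, q x = ∫ x in S, s x * q x →
      ∫ x in S, h x * δ x * q x = 0 := by
    intro S a c hS hclip hδS hc
    calc ∫ x in S, h x * δ x * q x = ∫ x in S, h a * ((c - s x) * q x) :=
          setIntegral_congr_fun hS fun x hx => by rw [hh x, hclip x hx, hδS x hx, mul_assoc]
      _ = 0 := by rw [integral_const_mul, setIntegral_sub_mul_eq_zero hq.integrableOn hc, mul_zero]
  have hIic : ∫ x in Iic α, h x * δ x * q x = 0 :=
    tail measurableSet_Iic (fun x hx => clip_of_le_left hx) (fun x hx => by simp [hδ x, hx.out]) hA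
  have hIci : ∫ x in Ici β, h x * δ x * q x = 0 := by
    refine tail measurableSet_Ici (fun x hx => clip_of_right_le hx) (fun x hx => ?_) hB
    simp [hδ x, (hαβ.trans_le hx.out).not_ge, hx.out]
  have hmiddle : ∀ x, x ∉ Iic α ∪ Ici β → h x * δ x * q x = 0 := fun x hx => by
    simp only [mem_union, mem_Iic, mem_Ici, not_or, not_le] at hx
    simp [hδ x, hx.1.not_ge, hx.2]
  rw [← setIntegral_eq_integral_of_forall_compl_eq_zero hmiddle,
    setIntegral_union (Iic_disjoint_Ici.2 hαβ.not_ge) measurableSet_Ici hint.integrableOn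
      hint.integrableOn, hIic, hIci, add_zero]

lemma IsClipCentered.integral_mul_add_mul_mul {α β : ℝ} {δ q h : ℝ → ℝ}
    (hδ : IsClipCentered α β δ q) (hh : ∀ x, h x = h (clip α β x))
    (hhq : Integrable fun x => h x * q x) (a b : ℝ)
    (hint : Integrable fun x => h x * (δ x + a) * (q x * b)) :
    ∫ x, h x * (δ x + a) * (q x * b) = (∫ x, h x * q x) * a * b := by
  rcases eq_or_ne b 0 with rfl | hb
  · simp
  have hδq : Integrable fun x => h x * δ x * q x := by
    refine ((hint.sub ((hhq.mul_const a).mul_const b)).div_const b).congr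
      (ae_of_all _ fun x => ?_)
    simp only [Pi.sub_apply]
    field_simp
    ring
  have hsplit : (fun x => h x * (δ x + a) * (q x * b)) =
      fun x => h x * δ x * q x * b + h x * q x * (a * b) := by
    funext x
    ring
  rw [hsplit, integral_add (hδq.mul_const b) (hhq.mul_const _), integral_mul_const,
    integral_mul_const, hδ h hh hδq]
  ring

section FinCons

variable {α : Type*} [MeasureSpace α] {n : ℕ}

lemma coe_piFinSuccAbove_zero_symm :
    ⇑(MeasurableEquiv.piFinSuccAbove (fun _ : Fin (n + 1) => α) 0).symm =
      fun z => Fin.cons z.1 z.2 := by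
  funext z
  simp [MeasurableEquiv.piFinSuccAbove_symm_apply, Fin.insertNthEquiv, Fin.insertNth_zero']

lemma measurable_finCons :
    Measurable fun z : α × (Fin n → α) => (Fin.cons z.1 z.2 : Fin (n + 1) → α) := by
  rw [← coe_piFinSuccAbove_zero_symm]
  exact MeasurableEquiv.measurable _

variable [SigmaFinite (volume : Measure α)] {E : Type*} [NormedAddCommGroup E]

lemma integrable_comp_finCons_iff {F : (Fin (n + 1) → α) → E} :
    Integrable (fun z : α × (Fin n → α) => F (Fin.cons z.1 z.2)) ↔ Integrable F := by
  simpa only [Function.comp_def, coe_piFinSuccAbove_zero_symm] using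
    (volume_preserving_piFinSuccAbove (fun _ => α) 0).symm.integrable_comp_emb
      (MeasurableEquiv.measurableEmbedding _) (g := F)

lemma integral_comp_finCons [NormedSpace ℝ E] (F : (Fin (n + 1) → α) → E) :
    ∫ z : α × (Fin n → α), F (Fin.cons z.1 z.2) = ∫ u, F u := by
  simpa only [coe_piFinSuccAbove_zero_symm] using
    (volume_preserving_piFinSuccAbove (fun _ => α) 0).symm.integral_comp' F

end FinCons

lemma measurable_integral_finCons_mul {n : ℕ} {f : (Fin (n + 1) → ℝ) → ℝ} {q : ℝ → ℝ}
    (hf : Measurable f) (hq : Integrable q) :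
    Measurable fun y => ∫ x, f (Fin.cons x y) * q x := by
  have hmk : (fun y => ∫ x, f (Fin.cons x y) * q x) =
      fun y => ∫ x, f (Fin.cons x y) * hq.aestronglyMeasurable.mk q x := funext fun y =>
    integral_congr_ae (hq.aestronglyMeasurable.ae_eq_mk.mono fun x hx => by simp only [hx])
  rw [hmk]
  have hmeas := (hf.comp measurable_finCons).mul
    (hq.aestronglyMeasurable.stronglyMeasurable_mk.measurable.comp measurable_fst)
  exact hmeas.stronglyMeasurable.integral_prod_left'.measurable

theorem integral_mul_sum_mul_prod_eq_zero {α β : ℝ} :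
    ∀ {n : ℕ} {q δ : Fin n → ℝ → ℝ} {f : (Fin n → ℝ) → ℝ},
    (∀ i, Integrable (q i)) → (∀ i, IsClipCentered α β (δ i) (q i)) →
    Measurable f → ClipInvariant α β f → (∃ M, ∀ u, |f u| ≤ M) →
    Integrable (fun u => f u * (∑ i, δ i (u i)) * ∏ i, q i (u i)) →
    ∫ u, f u * (∑ i, δ i (u i)) * ∏ i, q i (u i) = 0
  | 0, _, _, _, _, _, _, _, _, _ => by simp
  | n + 1, q, δ, f, hq, hδ, hf, hclip, ⟨M, hM⟩, hint => by
    set F : (Fin (n + 1) → ℝ) → ℝ := fun u => f u * (∑ i, δ i (u i)) * ∏ i, q i (u i)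
    set g : (Fin n → ℝ) → ℝ := fun y => ∫ x, f (Fin.cons x y) * q 0 x
    have hfq : ∀ y : Fin n → ℝ, Integrable fun x => f (Fin.cons x y) * q 0 x := fun y =>
      (hq 0).bdd_mul
        (hf.comp (measurable_finCons.comp measurable_prodMk_right)).aestronglyMeasurable
        (ae_of_all _ fun x => hM _)
    have hgM : ∀ y, |g y| ≤ M * ∫ x, |q 0 x| := fun y => by
      rw [← integral_const_mul, ← Real.norm_eq_abs]
      exact norm_integral_le_of_norm_le ((hq 0).abs.const_mul M) (ae_of_all _ fun x => by
        rw [Real.norm_eq_abs, abs_mul]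
        exact mul_le_mul_of_nonneg_right (hM _) (abs_nonneg _))
    have hG := integrable_comp_finCons_iff.2 hint
    have hslice : ∀ᵐ y, ∫ x, F (Fin.cons x y) =
        g y * (∑ j, δ j.succ (y j)) * ∏ j, q j.succ (y j) := by
      filter_upwards [hG.prod_left_ae] with y hy
      simp only [F, Fin.sum_univ_succ, Fin.prod_univ_succ, Fin.cons_zero, Fin.cons_succ] at hy ⊢
      exact (hδ 0).integral_mul_add_mul_mul
        (fun x => hclip.apply_finCons_eq (clip_clip α β x).symm fun _ => rfl) (hfq y) _ _ hy
    rw [← integral_comp_finCons, Measure.volume_eq_prod, integral_prod_symm _ hG,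
      integral_congr_ae hslice]
    exact integral_mul_sum_mul_prod_eq_zero (fun j => hq j.succ) (fun j => hδ j.succ)
      (measurable_integral_finCons_mul hf (hq 0)) (hclip.integral_finCons_mul (q 0)) ⟨_, hgM⟩
      (hG.integral_prod_right.congr hslice)

lemma mul_eq_of_hasDerivAt_log {F : ℝ → ℝ} {F' c θ : ℝ} (hF : ∀ t, 0 ≤ F t)
    (hF' : HasDerivAt F F' θ) (hlog : HasDerivAt (fun t => Real.log (F t)) c θ) :
    c * F θ = F' := by
  rcases (hF θ).lt_or_eq with hpos | hzero
  · rw [hlog.unique (hF'.log hpos.ne')]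
    field_simp
  · have hmin : IsLocalMin F θ := Filter.Eventually.of_forall fun t => hzero ▸ hF t
    rw [← hzero, hmin.hasDerivAt_eq_zero hF', mul_zero]

lemma one_sub_setIntegral_Iic {P : ℝ → ℝ} (hP : ∫ x, P x = 1) (b : ℝ) :
    1 - ∫ x in Iic b, P x = ∫ x in Ici b, P x := by
  have hPi : Integrable P := .of_integral_ne_zero (by rw [hP]; exact one_ne_zero)
  rw [integral_Ici_eq_integral_Ioi, ← hP,
    ← intervalIntegral.integral_Iic_add_Ioi hPi.integrableOn hPi.integrableOn, add_sub_cancel_left]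

theorem capg_unbiased_vector_general
    (d : ℕ)
    (p : Fin d → ℝ → ℝ → ℝ) (p' ψ ψbar : Fin d → ℝ → ℝ) (f : (Fin d → ℝ) → ℝ)
    (θ α β : ℝ) (cA cB : Fin d → ℝ) (hαβ : α < β)
    (hpdf : ∀ i t, ∫ u, p i t u = 1) (hnn : ∀ i t u, 0 ≤ p i t u)
    (hp' : ∀ i u, HasDerivAt (fun t => p i t u) (p' i u) θ)
    (hψ : ∀ i u, HasDerivAt (fun t => Real.log (p i t u)) (ψ i u) θ)
    (hswapA : ∀ i, HasDerivAt (fun t => ∫ u in Iic α, p i t u) (∫ u in Iic α, p' i u) θ)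
    (hswapB : ∀ i, HasDerivAt (fun t => ∫ u in Ici β, p i t u) (∫ u in Ici β, p' i u) θ)
    (hcA : ∀ i, HasDerivAt (fun t => Real.log (∫ u in Iic α, p i t u)) (cA i) θ)
    (hcB : ∀ i, HasDerivAt (fun t => Real.log (1 - ∫ u in Iic β, p i t u)) (cB i) θ)
    (hψbar : ∀ i u, ψbar i u = if u ≤ α then cA i else if u < β then ψ i u else cB i)
    (hclip : ∀ u : Fin d → ℝ, f u = f (fun i => max (min (u i) β) α))
    (hfmeas : Measurable f) (hfbdd : ∃ M : ℝ, ∀ u, |f u| ≤ M)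
    (hint : Integrable (fun u : Fin d → ℝ => f u * (∑ i, ψ i (u i)) * ∏ i, p i θ (u i)))
    (hint' : Integrable (fun u : Fin d → ℝ => f u * (∑ i, ψbar i (u i)) * ∏ i, p i θ (u i))) :
    ∫ u : Fin d → ℝ, f u * (∑ i, ψbar i (u i)) * ∏ i, p i θ (u i) =
      ∫ u : Fin d → ℝ, f u * (∑ i, ψ i (u i)) * ∏ i, p i θ (u i) := by
  have hscore : ∀ i, (fun u => ψ i u * p i θ u) = p' i := fun i => funext fun u =>
    mul_eq_of_hasDerivAt_log (F := fun t => p i t u) (hnn i · u) (hp' i u) (hψ i u)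
  have hcentered : ∀ i, IsClipCentered α β (fun u => ψbar i u - ψ i u) (p i θ) := by
    intro i
    refine isClipCentered_of_tails hαβ (.of_integral_ne_zero (by simp [hpdf])) (s := ψ i)
      (cA := cA i) (cB := cB i) (fun u => by rw [hψbar]; split_ifs <;> ring) ?_ ?_
    · rw [hscore]
      exact mul_eq_of_hasDerivAt_log (fun t => setIntegral_nonneg measurableSet_Iic
        fun u _ => hnn i t u) (hswapA i) (hcA i)
    · rw [hscore]
      refine mul_eq_of_hasDerivAt_log (fun t => setIntegral_nonneg measurableSet_Ici
        fun u _ => hnn i t u) (hswapB i) ?_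
      simpa only [one_sub_setIntegral_Iic (hpdf i _)] using hcB i
  have hdiff : (fun u : Fin d → ℝ => f u * (∑ i, ψbar i (u i)) * ∏ i, p i θ (u i) -
      f u * (∑ i, ψ i (u i)) * ∏ i, p i θ (u i)) =
      fun u => f u * (∑ i, (ψbar i (u i) - ψ i (u i))) * ∏ i, p i θ (u i) := by
    funext u
    rw [Finset.sum_sub_distrib]
    ring
  rw [← sub_eq_zero, ← integral_sub hint' hint, hdiff]
  exact integral_mul_sum_mul_prod_eq_zero (fun i => .of_integral_ne_zero (by simp [hpdf]))
    hcentered hfmeas hclip hfbdd (hdiff ▸ hint'.sub hint)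

/-- unbiasedness of CAPG for vector actions with independent coordinates:
`E_u[f(u) ψ̄(u)] = E_u[f(u) ψ(u)]` where `ψ(u) = Σ_i ∇_θ log p_θ^{(i)}(u_i)` and
`ψ̄(u) = Σ_i ψ̄^{(i)}(u_i)`, the joint density being the product of the coordinates'
densities, and `f` invariant under elementwise clipping. -/
theorem capg_unbiased_vector
    (d : ℕ) (hd : 1 ≤ d)
    (p : Fin d → ℝ → ℝ → ℝ) (p' ψ ψbar : Fin d → ℝ → ℝ) (f : (Fin d → ℝ) → ℝ)
    (θ α β : ℝ) (cA cB : Fin d → ℝ) (hαβ : α < β)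
    (hpdf : ∀ i t, ∫ u, p i t u = 1) (hnn : ∀ i t u, 0 ≤ p i t u)
    (hp' : ∀ i u, HasDerivAt (fun t => p i t u) (p' i u) θ)
    (hψ : ∀ i u, HasDerivAt (fun t => Real.log (p i t u)) (ψ i u) θ)
    (hswapA : ∀ i, HasDerivAt (fun t => ∫ u in Iic α, p i t u) (∫ u in Iic α, p' i u) θ)
    (hswapB : ∀ i, HasDerivAt (fun t => ∫ u in Ici β, p i t u) (∫ u in Ici β, p' i u) θ)
    (hposA : ∀ i, 0 < ∫ u in Iic α, p i θ u)
    (hltB : ∀ i, (∫ u in Iic β, p i θ u) < 1)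
    (hcA : ∀ i, HasDerivAt (fun t => Real.log (∫ u in Iic α, p i t u)) (cA i) θ)
    (hcB : ∀ i, HasDerivAt (fun t => Real.log (1 - ∫ u in Iic β, p i t u)) (cB i) θ)
    (hψbar : ∀ i u, ψbar i u = if u ≤ α then cA i else if u < β then ψ i u else cB i)
    (hclip : ∀ u : Fin d → ℝ, f u = f (fun i => max (min (u i) β) α))
    (hfmeas : Measurable f) (hfbdd : ∃ M : ℝ, ∀ u, |f u| ≤ M)
    (hint : Integrable (fun u : Fin d → ℝ => f u * (∑ i, ψ i (u i)) * ∏ i, p i θ (u i)))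
    (hint' : Integrable (fun u : Fin d → ℝ => f u * (∑ i, ψbar i (u i)) * ∏ i, p i θ (u i))) :
    ∫ u : Fin d → ℝ, f u * (∑ i, ψbar i (u i)) * ∏ i, p i θ (u i) =
      ∫ u : Fin d → ℝ, f u * (∑ i, ψ i (u i)) * ∏ i, p i θ (u i) :=
  capg_unbiased_vector_general d p p' ψ ψbar f θ α β cA cB hαβ hpdf hnn hp' hψ hswapA hswapB hcA hcB
    hψbar hclip hfmeas hfbdd hint hint'
end

section
/- Let X = f(u)ψ(u) and Y = f(u)ψ̄(u) under u ∼ π_θ as in the scalar CAPG setting, and suppose additionally a baseline b ∈ ℝ is subtracted: X' = (f(u) - b)ψ(u), Y' = (f(u) - b)ψ̄(u). Then E[Y'] = E[X'] = E[X] - b·E[ψ(u)] = E[X], assuming the score has zero mean, and Var[Y'] ≤ Var[X']. -/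
open MeasureTheory Set

/-
Differentiating `t ↦ ∫_S p t` shows that on each tail `S` of the clipping the
constant `ψ̄ = (log Π)'` is exactly the `p θ`-mean of the score over `S`. Since `f - b` is
constant on each tail, replacing `ψ` by its mean there leaves the first moment of `(f - b) ψ`
unchanged and, by Jensen's inequality on `S`, can only decrease its second moment; on the
middle interval nothing changes. The baseline itself drops out of the mean because the score has
zero mean.
-/

lemma integral_eq_Iic_add_Ioo_add_Ici {a c : ℝ} (hac : a < c) {G : ℝ → ℝ} (hG : Integrable G) :
    ∫ u, G u = (∫ u in Iic a, G u) + (∫ u in Ioo a c, G u) + ∫ u in Ici c, G u := by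
  rw [← intervalIntegral.integral_Iic_add_Ioi hG.integrableOn hG.integrableOn,
    ← Ioo_union_Ici_eq_Ioi hac, add_assoc,
    setIntegral_union ((Iio_disjoint_Ici le_rfl).mono_left Ioo_subset_Iio_self) measurableSet_Ici
      hG.integrableOn hG.integrableOn]

lemma Vpi_eq_integral_sq_sub_sq {p g : ℝ → ℝ} (hp1 : ∫ u, p u = 1)
    (hg : Integrable (fun u => g u * p u)) (hg2 : Integrable (fun u => g u ^ 2 * p u)) :
    Vpi p g = (∫ u, g u ^ 2 * p u) - Epi p g ^ 2 := by
  set m := Epi p g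
  have hp : Integrable p := integrable_of_integral_eq_one hp1
  have hexpand : (fun u => (g u - m) ^ 2 * p u)
      = fun u => (g u ^ 2 * p u - 2 * m * (g u * p u)) + m ^ 2 * p u := by
    funext u; ring
  have hfirst : Integrable (fun u => g u ^ 2 * p u - 2 * m * (g u * p u)) :=
    hg2.sub (hg.const_mul _)
  rw [Vpi, hexpand, integral_add hfirst (hp.const_mul _), integral_sub hg2 (hg.const_mul _),
    integral_const_mul, integral_const_mul, hp1]
  change _ - 2 * m * m + m ^ 2 * 1 = _
  ring

/-- At a zero of `g`, `θ` is a minimum of `g`, so both sides vanish. -/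
lemma hasDerivAt_eq_mul_of_hasDerivAt_log {g : ℝ → ℝ} {g' s θ : ℝ} (hd : HasDerivAt g g' θ)
    (hlog : HasDerivAt (fun t => Real.log (g t)) s θ) (hg : ∀ t, 0 ≤ g t) :
    g' = s * g θ := by
  rcases (hg θ).lt_or_eq with hpos | hzero
  · rw [hlog.unique (hd.log hpos.ne'), div_mul_cancel₀ _ hpos.ne']
  · have hmin : IsLocalMin g θ := Filter.Eventually.of_forall fun t => hzero ▸ hg t
    rw [hmin.hasDerivAt_eq_zero hd, ← hzero, mul_zero]

lemma setIntegral_Ici_eq_one_sub {p : ℝ → ℝ} (hp1 : ∫ u, p u = 1) (β : ℝ) :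
    ∫ u in Ici β, p u = 1 - ∫ u in Iic β, p u := by
  have hp : Integrable p := integrable_of_integral_eq_one hp1
  rw [integral_Ici_eq_integral_Ioi, ← hp1,
    ← intervalIntegral.integral_Iic_add_Ioi hp.integrableOn hp.integrableOn]
  ring

lemma integral_sub_const_mul_eq {f ψ p : ℝ → ℝ} (b : ℝ) (hψ : Integrable (fun u => ψ u * p u))
    (hf : Integrable (fun u => f u * ψ u * p u)) (hzero : ∫ u, ψ u * p u = 0) :
    ∫ u, (f u - b) * ψ u * p u = ∫ u, f u * ψ u * p u := by
  have hsplit : (fun u => (f u - b) * ψ u * p u)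
      = fun u => f u * ψ u * p u - b * (ψ u * p u) := by
    funext u; ring
  rw [hsplit, integral_sub hf (hψ.const_mul b), integral_const_mul, hzero, mul_zero, sub_zero]

/-- Jensen's inequality for the square, on `S`. -/
lemma sq_mul_setIntegral_le {p ψ : ℝ → ℝ} {S : Set ℝ} (hS : MeasurableSet S)
    (hp : ∀ u, 0 ≤ p u) (hpS : IntegrableOn p S) (hψ : IntegrableOn (fun u => ψ u * p u) S)
    {c d : ℝ} (hψ2 : IntegrableOn (fun u => (c * ψ u) ^ 2 * p u) S)
    (hmean : ∫ u in S, ψ u * p u = d * ∫ u in S, p u) :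
    (c * d) ^ 2 * ∫ u in S, p u ≤ ∫ u in S, (c * ψ u) ^ 2 * p u := by
  have hnonneg : 0 ≤ ∫ u in S, (c * ψ u - c * d) ^ 2 * p u :=
    setIntegral_nonneg hS fun u _ => mul_nonneg (sq_nonneg _) (hp u)
  have hexpand : (fun u => (c * ψ u - c * d) ^ 2 * p u)
      = fun u => ((c * ψ u) ^ 2 * p u - 2 * c ^ 2 * d * (ψ u * p u)) + (c * d) ^ 2 * p u := by
    funext u; ring
  have hfirst : IntegrableOn (fun u => (c * ψ u) ^ 2 * p u - 2 * c ^ 2 * d * (ψ u * p u)) S :=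
    hψ2.sub (hψ.const_mul _)
  rw [hexpand, integral_add hfirst (hpS.const_mul _), integral_sub hψ2 (hψ.const_mul _),
    integral_const_mul, integral_const_mul, hmean] at hnonneg
  nlinarith

section Clipping

variable {ψ f p : ℝ → ℝ} {α β cA cB b : ℝ}

lemma setIntegral_mul_eq_of_const {ψbar : ℝ → ℝ} {k c : ℝ} {S : Set ℝ} (hS : MeasurableSet S)
    (hf : ∀ u ∈ S, f u = k) (hψbar : ∀ u ∈ S, ψbar u = c)
    (hmean : ∫ u in S, ψ u * p u = c * ∫ u in S, p u) :
    ∫ u in S, (f u - b) * ψbar u * p u = ∫ u in S, (f u - b) * ψ u * p u := by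
  have hclip : ∫ u in S, (f u - b) * ψbar u * p u = ∫ u in S, (k - b) * c * p u :=
    setIntegral_congr_fun hS fun u hu => by rw [hf u hu, hψbar u hu]
  have hscore : ∫ u in S, (f u - b) * ψ u * p u = ∫ u in S, (k - b) * (ψ u * p u) :=
    setIntegral_congr_fun hS fun u hu => by rw [hf u hu, mul_assoc]
  rw [hclip, hscore, integral_const_mul, integral_const_mul, hmean, mul_assoc]

lemma setIntegral_sq_mul_le_of_const {ψbar : ℝ → ℝ} {k c : ℝ} {S : Set ℝ}
    (hS : MeasurableSet S) (hf : ∀ u ∈ S, f u = k) (hψbar : ∀ u ∈ S, ψbar u = c)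
    (hmean : ∫ u in S, ψ u * p u = c * ∫ u in S, p u) (hp : ∀ u, 0 ≤ p u)
    (hpS : IntegrableOn p S) (hψ : IntegrableOn (fun u => ψ u * p u) S)
    (hg2 : IntegrableOn (fun u => ((f u - b) * ψ u) ^ 2 * p u) S) :
    ∫ u in S, ((f u - b) * ψbar u) ^ 2 * p u ≤ ∫ u in S, ((f u - b) * ψ u) ^ 2 * p u := by
  have hclip : ∫ u in S, ((f u - b) * ψbar u) ^ 2 * p u
      = ((k - b) * c) ^ 2 * ∫ u in S, p u := by
    rw [← integral_const_mul]
    exact setIntegral_congr_fun hS fun u hu => by rw [hf u hu, hψbar u hu]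
  have hscore : EqOn (fun u => ((f u - b) * ψ u) ^ 2 * p u)
      (fun u => ((k - b) * ψ u) ^ 2 * p u) S := fun u hu => by simp only [hf u hu]
  rw [hclip, setIntegral_congr_fun hS hscore]
  exact sq_mul_setIntegral_le hS hp hpS hψ (hg2.congr_fun hscore hS) hmean

/-- The CAPG score `ψ̄`. -/
noncomputable def clipScore (ψ : ℝ → ℝ) (α β cA cB : ℝ) (u : ℝ) : ℝ :=
  if u ≤ α then cA else if u < β then ψ u else cB

lemma clipScore_of_mem_Iic {u : ℝ} (hu : u ∈ Iic α) : clipScore ψ α β cA cB u = cA :=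
  if_pos hu

lemma clipScore_of_mem_Ioo {u : ℝ} (hu : u ∈ Ioo α β) : clipScore ψ α β cA cB u = ψ u := by
  rw [clipScore, if_neg hu.1.not_ge, if_pos hu.2]

lemma clipScore_of_mem_Ici (hαβ : α < β) {u : ℝ} (hu : u ∈ Ici β) :
    clipScore ψ α β cA cB u = cB := by
  rw [clipScore, if_neg (hαβ.trans_le hu).not_ge, if_neg (not_lt.2 hu)]

lemma integral_clipScore_eq (hαβ : α < β) (hfA : ∀ u ∈ Iic α, f u = f α)
    (hfB : ∀ u ∈ Ici β, f u = f β) (hA : ∫ u in Iic α, ψ u * p u = cA * ∫ u in Iic α, p u)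
    (hB : ∫ u in Ici β, ψ u * p u = cB * ∫ u in Ici β, p u)
    (hint : Integrable (fun u => (f u - b) * ψ u * p u))
    (hint' : Integrable (fun u => (f u - b) * clipScore ψ α β cA cB u * p u)) :
    ∫ u, (f u - b) * clipScore ψ α β cA cB u * p u = ∫ u, (f u - b) * ψ u * p u := by
  rw [integral_eq_Iic_add_Ioo_add_Ici hαβ hint', integral_eq_Iic_add_Ioo_add_Ici hαβ hint,
    setIntegral_mul_eq_of_const measurableSet_Iic hfA (fun _ => clipScore_of_mem_Iic) hA,
    setIntegral_mul_eq_of_const measurableSet_Ici hfB (fun _ => clipScore_of_mem_Ici hαβ) hB,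
    setIntegral_congr_fun measurableSet_Ioo fun u hu => by rw [clipScore_of_mem_Ioo hu]]

lemma integrable_clipScore_sq (hαβ : α < β) (hfA : ∀ u ∈ Iic α, f u = f α)
    (hfB : ∀ u ∈ Ici β, f u = f β) (hp : Integrable p)
    (hint2 : Integrable (fun u => ((f u - b) * ψ u) ^ 2 * p u)) :
    Integrable (fun u => ((f u - b) * clipScore ψ α β cA cB u) ^ 2 * p u) := by
  rw [← integrableOn_univ, ← Iic_union_Ioi (a := α), ← Ioo_union_Ici_eq_Ioi hαβ]
  refine .union ?_ (.union ?_ ?_)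
  · exact IntegrableOn.congr_fun (hp.integrableOn.const_mul (((f α - b) * cA) ^ 2))
      (fun u hu => by simp only [hfA u hu, clipScore_of_mem_Iic hu]) measurableSet_Iic
  · exact hint2.integrableOn.congr_fun
      (fun u hu => by simp only [clipScore_of_mem_Ioo hu]) measurableSet_Ioo
  · exact IntegrableOn.congr_fun (hp.integrableOn.const_mul (((f β - b) * cB) ^ 2))
      (fun u hu => by simp only [hfB u hu, clipScore_of_mem_Ici hαβ hu]) measurableSet_Ici

lemma integral_clipScore_sq_le (hαβ : α < β) (hfA : ∀ u ∈ Iic α, f u = f α)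
    (hfB : ∀ u ∈ Ici β, f u = f β) (hA : ∫ u in Iic α, ψ u * p u = cA * ∫ u in Iic α, p u)
    (hB : ∫ u in Ici β, ψ u * p u = cB * ∫ u in Ici β, p u) (hp : ∀ u, 0 ≤ p u)
    (hpint : Integrable p) (hψ : Integrable (fun u => ψ u * p u))
    (hint2 : Integrable (fun u => ((f u - b) * ψ u) ^ 2 * p u)) :
    ∫ u, ((f u - b) * clipScore ψ α β cA cB u) ^ 2 * p u
      ≤ ∫ u, ((f u - b) * ψ u) ^ 2 * p u := by
  rw [integral_eq_Iic_add_Ioo_add_Ici hαβ (integrable_clipScore_sq hαβ hfA hfB hpint hint2),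
    integral_eq_Iic_add_Ioo_add_Ici hαβ hint2,
    setIntegral_congr_fun measurableSet_Ioo fun u hu => by rw [clipScore_of_mem_Ioo hu]]
  gcongr ?_ + _ + ?_
  · exact setIntegral_sq_mul_le_of_const measurableSet_Iic hfA (fun _ => clipScore_of_mem_Iic)
      hA hp hpint.integrableOn hψ.integrableOn hint2.integrableOn
  · exact setIntegral_sq_mul_le_of_const measurableSet_Ici hfB
      (fun _ => clipScore_of_mem_Ici hαβ) hB hp hpint.integrableOn hψ.integrableOn
      hint2.integrableOn

end Clipping

theorem capg_with_baseline_general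
    (p : ℝ → ℝ → ℝ) (p' ψ ψbar f : ℝ → ℝ) (θ α β cA cB b : ℝ) (hαβ : α < β)
    (hpdf : ∀ t, ∫ u, p t u = 1) (hnn : ∀ t u, 0 ≤ p t u)
    (hp' : ∀ u, HasDerivAt (fun t => p t u) (p' u) θ)
    (hψ : ∀ u, HasDerivAt (fun t => Real.log (p t u)) (ψ u) θ)
    (hswapA : HasDerivAt (fun t => ∫ u in Iic α, p t u) (∫ u in Iic α, p' u) θ)
    (hswapB : HasDerivAt (fun t => ∫ u in Ici β, p t u) (∫ u in Ici β, p' u) θ)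
    (hcA : HasDerivAt (fun t => Real.log (∫ u in Iic α, p t u)) cA θ)
    (hcB : HasDerivAt (fun t => Real.log (1 - ∫ u in Iic β, p t u)) cB θ)
    (hψbar : ∀ u, ψbar u = if u ≤ α then cA else if u < β then ψ u else cB)
    (hfA : ∀ u, u ≤ α → f u = f α) (hfB : ∀ u, β ≤ u → f u = f β)
    (hzero : ∫ u, ψ u * p θ u = 0)
    (hintψ : Integrable (fun u => ψ u * p θ u))
    (hint2 : Integrable (fun u => ((f u - b) * ψ u)^2 * p θ u))
    (hint1 : Integrable (fun u => (f u - b) * ψ u * p θ u))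
    (hint1' : Integrable (fun u => (f u - b) * ψbar u * p θ u))
    (hintf : Integrable (fun u => f u * ψ u * p θ u)) :
    (∫ u, (f u - b) * ψbar u * p θ u = ∫ u, (f u - b) * ψ u * p θ u) ∧
    (∫ u, (f u - b) * ψ u * p θ u = ∫ u, f u * ψ u * p θ u) ∧
    Vpi (p θ) (fun u => (f u - b) * ψbar u) ≤ Vpi (p θ) (fun u => (f u - b) * ψ u) := by
  obtain rfl : ψbar = clipScore ψ α β cA cB := funext hψbar
  have hscore : p' = fun u => ψ u * p θ u :=
    funext fun u =>
      hasDerivAt_eq_mul_of_hasDerivAt_log (g := fun t => p t u) (hp' u) (hψ u) fun t => hnn t u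
  have hA : ∫ u in Iic α, ψ u * p θ u = cA * ∫ u in Iic α, p θ u := by
    simpa only [hscore] using hasDerivAt_eq_mul_of_hasDerivAt_log hswapA hcA
      fun t => integral_nonneg fun u => hnn t u
  have hB : ∫ u in Ici β, ψ u * p θ u = cB * ∫ u in Ici β, p θ u := by
    simp only [← setIntegral_Ici_eq_one_sub (hpdf _)] at hcB
    simpa only [hscore] using hasDerivAt_eq_mul_of_hasDerivAt_log hswapB hcB
      fun t => integral_nonneg fun u => hnn t u
  have hmean := integral_clipScore_eq hαβ hfA hfB hA hB hint1 hint1'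
  have hPint : Integrable (p θ) := integrable_of_integral_eq_one (hpdf θ)
  refine ⟨hmean, integral_sub_const_mul_eq b hintψ hintf hzero, ?_⟩
  rw [Vpi_eq_integral_sq_sub_sq (hpdf θ) hint1'
      (integrable_clipScore_sq hαβ hfA hfB hPint hint2),
    Vpi_eq_integral_sq_sub_sq (hpdf θ) hint1 hint2, Epi, Epi, hmean]
  exact sub_le_sub_right
    (integral_clipScore_sq_le hαβ hfA hfB hA hB (hnn θ) hPint hintψ hint2) _

/-- CAPG with a baseline `b`. Subtracting a constant baseline preserves
unbiasedness (given the zero-mean score property) and the variance inequality: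
`E[(f-b)ψ̄] = E[(f-b)ψ] = E[fψ]` and `Var[(f-b)ψ̄] ≤ Var[(f-b)ψ]`. -/
theorem capg_with_baseline
    (p : ℝ → ℝ → ℝ) (p' ψ ψbar f : ℝ → ℝ) (θ α β cA cB b : ℝ) (hαβ : α < β)
    (hpdf : ∀ t, ∫ u, p t u = 1) (hnn : ∀ t u, 0 ≤ p t u)
    (hp' : ∀ u, HasDerivAt (fun t => p t u) (p' u) θ)
    (hψ : ∀ u, HasDerivAt (fun t => Real.log (p t u)) (ψ u) θ)
    (hswapA : HasDerivAt (fun t => ∫ u in Iic α, p t u) (∫ u in Iic α, p' u) θ)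
    (hswapB : HasDerivAt (fun t => ∫ u in Ici β, p t u) (∫ u in Ici β, p' u) θ)
    (hposA : 0 < ∫ u in Iic α, p θ u)
    (hle : (∫ u in Iic α, p θ u) ≤ ∫ u in Iic β, p θ u)
    (hltB : (∫ u in Iic β, p θ u) < 1)
    (hcA : HasDerivAt (fun t => Real.log (∫ u in Iic α, p t u)) cA θ)
    (hcB : HasDerivAt (fun t => Real.log (1 - ∫ u in Iic β, p t u)) cB θ)
    (hψbar : ∀ u, ψbar u = if u ≤ α then cA else if u < β then ψ u else cB)
    (hfA : ∀ u, u ≤ α → f u = f α) (hfB : ∀ u, β ≤ u → f u = f β)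
    (hfbdd : ∃ M : ℝ, ∀ u, |f u| ≤ M)
    (hzero : ∫ u, ψ u * p θ u = 0)
    (hintψ : Integrable (fun u => ψ u * p θ u))
    (hint2 : Integrable (fun u => ((f u - b) * ψ u)^2 * p θ u))
    (hint1 : Integrable (fun u => (f u - b) * ψ u * p θ u))
    (hint1' : Integrable (fun u => (f u - b) * ψbar u * p θ u))
    (hintf : Integrable (fun u => f u * ψ u * p θ u)) :
    (∫ u, (f u - b) * ψbar u * p θ u = ∫ u, (f u - b) * ψ u * p θ u) ∧
    (∫ u, (f u - b) * ψ u * p θ u = ∫ u, f u * ψ u * p θ u) ∧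
    Vpi (p θ) (fun u => (f u - b) * ψbar u) ≤ Vpi (p θ) (fun u => (f u - b) * ψ u) :=
  capg_with_baseline_general p p' ψ ψbar f θ α β cA cB b hαβ hpdf hnn hp' hψ hswapA hswapB hcA hcB
    hψbar hfA hfB hzero hintψ hint2 hint1 hint1' hintf
end
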